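/- Let K ≥ 1 and j ≥ 0 be integers, let a be real, b > 0 real, and let m be an integer with m > a + 2bK. Then the improper integrals I_{C₃}(K,j;a−m,b) and I_{C₄}(K,j;a−m,b) converge absolutely and I_{C₀}(K,j;a−m,b) = I_{C₃}(K,j;a−m,b) − I_{C₄}(K,j;a−m,b). -/

import Mathlib

open MeasureTheory

/-- `I_{C₀}(K,j;c,b) = K^{-j} ∫_0^K t^j exp(2πi c t + 2πi b t²) dt`. -/
noncomputable def IC0 (K j : ℕ) (c b : ℝ) : ℂ :=
  ((K : ℂ) ^ j)⁻¹ * ∫ t in (0 : ℝ)..(K : ℝ), (t : ℂ) ^ j *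
    Complex.exp (2 * (Real.pi : ℂ) * Complex.I * (c : ℂ) * (t : ℂ) +
      2 * (Real.pi : ℂ) * Complex.I * (b : ℂ) * (t : ℂ) ^ 2)

/-- The integrand of `I_{C₃}`, i.e. of the contour integral of
`z^j exp(2πi c z + 2πi b z²)` along the downward ray `{−it : t ≥ 0}`. -/
noncomputable def fC3 (K j : ℕ) (c b : ℝ) (t : ℝ) : ℂ :=
  (t : ℂ) ^ j * Complex.exp (2 * (Real.pi : ℂ) * (c : ℂ) * (t : ℂ) -
    2 * (Real.pi : ℂ) * Complex.I * (b : ℂ) * (t : ℂ) ^ 2)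

/-- `I_{C₃}(K,j;c,b) = (−i)^{j+1} K^{-j} ∫_0^∞ t^j exp(2πct − 2πib t²) dt`. -/
noncomputable def IC3 (K j : ℕ) (c b : ℝ) : ℂ :=
  (-Complex.I) ^ (j + 1) * ((K : ℂ) ^ j)⁻¹ * ∫ t in Set.Ioi (0 : ℝ), fC3 K j c b t

/-- The integrand of `I_{C₄}`, i.e. of the contour integral of
`z^j exp(2πi c z + 2πi b z²)` along the downward ray `{K−it : t ≥ 0}`. -/
noncomputable def fC4 (K j : ℕ) (c b : ℝ) (t : ℝ) : ℂ :=
  ((K : ℂ) - Complex.I * (t : ℂ)) ^ j *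
    Complex.exp (2 * (Real.pi : ℂ) * Complex.I * (c : ℂ) *
        ((K : ℂ) - Complex.I * (t : ℂ)) +
      2 * (Real.pi : ℂ) * Complex.I * (b : ℂ) *
        ((K : ℂ) - Complex.I * (t : ℂ)) ^ 2)

/-- `I_{C₄}(K,j;c,b) = −i K^{-j} ∫_0^∞ (K−it)^j exp(2πic(K−it) + 2πib(K−it)²) dt`. -/
noncomputable def IC4 (K j : ℕ) (c b : ℝ) : ℂ :=
  -Complex.I * ((K : ℂ) ^ j)⁻¹ * ∫ t in Set.Ioi (0 : ℝ), fC4 K j c b t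

/-!
Cauchy's theorem on the rectangle with vertices `0, K, K - iT, -iT`, applied to the entire
function `z ^ j * exp (2πi c z + 2πi b z²)`, trades the integral over `[0, K]` for the two
vertical sides and the bottom side. On the line `Im z = -t` the exponential factor has modulus
`exp (2π (c + 2b Re z) t)`, so for `c + 2bK < 0` the integrand decays exponentially in `t`,
uniformly for `0 ≤ Re z ≤ K`: the vertical sides converge absolutely and the bottom side
vanishes as `T → ∞`.
-/
open Set Filter Topology Real Complex
open scoped Nat Interval

section Decay

variable {E : Type*} [NormedAddCommGroup E]

lemma add_pow_mul_exp_neg_le (j : ℕ) {A r t : ℝ} (hA : 0 ≤ A) (hr : 0 < r) (ht : 0 ≤ t) :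
    (A + t) ^ j * rexp (-r * t) ≤ j ! * (2 / r) ^ j * rexp (r / 2 * A) * rexp (-(r / 2) * t) := by
  have hpow : (r / 2 * (A + t)) ^ j ≤ j ! * rexp (r / 2 * (A + t)) := by
    have := Real.pow_div_factorial_le_exp (x := r / 2 * (A + t)) (by positivity) j
    rwa [div_le_iff₀' (by positivity)] at this
  calc (A + t) ^ j * rexp (-r * t)
      = (2 / r) ^ j * (r / 2 * (A + t)) ^ j * rexp (-r * t) := by
        rw [← mul_pow]; congr 2; field_simp
    _ ≤ (2 / r) ^ j * (j ! * rexp (r / 2 * (A + t))) * rexp (-r * t) := by gcongr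
    _ = j ! * (2 / r) ^ j * rexp (r / 2 * A) * rexp (-(r / 2) * t) := by
        rw [mul_assoc, mul_assoc, ← Real.exp_add, mul_assoc, ← Real.exp_add]
        ring_nf

lemma tendsto_add_pow_mul_exp_neg_atTop (j : ℕ) {A r : ℝ} (hA : 0 ≤ A) (hr : 0 < r) :
    Tendsto (fun t => (A + t) ^ j * rexp (-r * t)) atTop (𝓝 0) := by
  have hexp : Tendsto (fun t => rexp (-(r / 2) * t)) atTop (𝓝 0) :=
    tendsto_exp_atBot.comp (tendsto_id.const_mul_atTop_of_neg (by linarith))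
  refine squeeze_zero' ?_ ?_
    (by simpa only [mul_zero] using hexp.const_mul (j ! * (2 / r) ^ j * rexp (r / 2 * A)))
  all_goals filter_upwards [eventually_ge_atTop 0] with t ht
  · have := add_nonneg hA ht
    positivity
  · exact add_pow_mul_exp_neg_le j hA hr ht

lemma integrableOn_Ioi_of_norm_le_add_pow_mul_exp_neg {f : ℝ → E} (hf : Continuous f) (j : ℕ)
    {A r : ℝ} (hA : 0 ≤ A) (hr : 0 < r)
    (hbound : ∀ t, 0 < t → ‖f t‖ ≤ (A + t) ^ j * rexp (-r * t)) :
    IntegrableOn f (Ioi 0) := by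
  refine Integrable.mono' ((exp_neg_integrableOn_Ioi 0 (half_pos hr)).const_mul
    (j ! * (2 / r) ^ j * rexp (r / 2 * A))) hf.aestronglyMeasurable.restrict ?_
  filter_upwards [ae_restrict_mem measurableSet_Ioi] with t ht
  exact (hbound t ht).trans (add_pow_mul_exp_neg_le j hA hr (le_of_lt ht))

lemma tendsto_intervalIntegral_zero_of_norm_le {ι : Type*} {l : Filter ι} {F : ι → ℝ → E}
    {g : ι → ℝ} {a b : ℝ} [NormedSpace ℝ E] (hF : ∀ᶠ i in l, ∀ x ∈ Ι a b, ‖F i x‖ ≤ g i)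
    (hg : Tendsto g l (𝓝 0)) :
    Tendsto (fun i => ∫ x in a..b, F i x) l (𝓝 0) := by
  rw [tendsto_zero_iff_norm_tendsto_zero]
  refine squeeze_zero' (Eventually.of_forall fun i => norm_nonneg _) ?_
    (by simpa using hg.mul_const |b - a|)
  filter_upwards [hF] with i hi
  exact intervalIntegral.norm_integral_le_of_norm_le_const hi

end Decay

section Contour

variable {E : Type*} [NormedAddCommGroup E] [NormedSpace ℂ E]

lemma intervalIntegral_eq_rect_sides_of_differentiable {f : ℂ → E} (hf : Differentiable ℂ f)
    (L T : ℝ) :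
    ∫ x in (0 : ℝ)..L, f x =
      (∫ x in (0 : ℝ)..L, f (x - T * I)) + I • (∫ t in (0 : ℝ)..T, f (L - t * I)) -
        I • ∫ t in (0 : ℝ)..T, f (-(t * I)) := by
  have h := integral_boundary_rect_eq_zero_of_differentiableOn f ⟨0, -T⟩ ⟨L, 0⟩
    hf.differentiableOn
  have hflip : ∀ g : ℝ → E, ∫ y in -T..0, g y = ∫ t in (0 : ℝ)..T, g (-t) := fun g => by
    simp
  simp only [hflip, ofReal_zero, ofReal_neg, zero_mul, add_zero, zero_add, neg_mul,
    ← sub_eq_add_neg] at h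
  -- otherwise `abel` rewrites inside the integrands, inconsistently between `h` and the goal
  generalize (∫ x in (0 : ℝ)..L, f x) = A at h ⊢
  generalize (∫ x in (0 : ℝ)..L, f (x - T * I)) = B at h ⊢
  rw [← sub_eq_zero, ← neg_eq_zero, ← h]
  abel

theorem intervalIntegral_eq_vertical_rays_of_differentiable [CompleteSpace E] {f : ℂ → E}
    (hf : Differentiable ℂ f) (L : ℝ)
    (h_bottom : Tendsto (fun T : ℝ => ∫ x in (0 : ℝ)..L, f (x - T * I)) atTop (𝓝 0))
    (h_right : IntegrableOn (fun t : ℝ => f (L - t * I)) (Ioi 0))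
    (h_left : IntegrableOn (fun t : ℝ => f (-(t * I))) (Ioi 0)) :
    ∫ x in (0 : ℝ)..L, f x =
      I • (∫ t in Ioi (0 : ℝ), f (L - t * I)) - I • ∫ t in Ioi (0 : ℝ), f (-(t * I)) := by
  have hlim := (h_bottom.add
    ((intervalIntegral_tendsto_integral_Ioi 0 h_right tendsto_id).const_smul I)).sub
    ((intervalIntegral_tendsto_integral_Ioi 0 h_left tendsto_id).const_smul I)
  rw [zero_add] at hlim
  refine tendsto_nhds_unique ?_ hlim
  simp only [id, ← intervalIntegral_eq_rect_sides_of_differentiable hf]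
  exact tendsto_const_nhds

end Contour

noncomputable def powMulExpQuad (j : ℕ) (c b : ℝ) (z : ℂ) : ℂ :=
  z ^ j * cexp (2 * π * I * c * z + 2 * π * I * b * z ^ 2)

lemma differentiable_powMulExpQuad (j : ℕ) (c b : ℝ) : Differentiable ℂ (powMulExpQuad j c b) := by
  unfold powMulExpQuad; fun_prop

lemma powMulExpQuad_sub_mul_I (K j : ℕ) (c b t : ℝ) :
    powMulExpQuad j c b (K - t * I) = fC4 K j c b t := by
  rw [powMulExpQuad, fC4, mul_comm (t : ℂ) I]

lemma powMulExpQuad_neg_mul_I (K j : ℕ) (c b t : ℝ) :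
    powMulExpQuad j c b (-(t * I)) = (-I) ^ j * fC3 K j c b t := by
  have hexp : 2 * π * I * c * (-(t * I)) + 2 * π * I * b * (-(t * I)) ^ 2 =
      2 * π * c * t - 2 * π * I * b * t ^ 2 := by
    linear_combination (2 * π * b * t ^ 2 * I - 2 * π * c * t) * I_sq
  rw [powMulExpQuad, fC3, hexp, neg_mul_eq_mul_neg, mul_pow]
  ring

lemma re_powMulExpQuad_exponent (c b x t : ℝ) :
    (2 * π * I * c * (x - t * I) + 2 * π * I * b * (x - t * I) ^ 2).re =
      2 * π * (c + 2 * b * x) * t := by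
  simp [pow_two]
  ring

lemma norm_powMulExpQuad_sub_mul_I_le (j : ℕ) {c b x L t : ℝ} (hb : 0 ≤ b) (hx : x ∈ Icc 0 L)
    (ht : 0 ≤ t) :
    ‖powMulExpQuad j c b (x - t * I)‖ ≤ (L + t) ^ j * rexp (2 * π * (c + 2 * b * L) * t) := by
  rw [powMulExpQuad, norm_mul, norm_pow, Complex.norm_exp, re_powMulExpQuad_exponent]
  have hnorm : ‖(x : ℂ) - t * I‖ ≤ L + t := by
    refine (Complex.norm_le_abs_re_add_abs_im _).trans ?_
    simp [abs_of_nonneg hx.1, abs_of_nonneg ht, hx.2]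
  have hL : 0 ≤ L + t := by linarith [hx.1, hx.2]
  have hgap : 0 ≤ 2 * π * (2 * b * (L - x)) * t := by
    have := sub_nonneg.2 hx.2
    positivity
  gcongr ?_ ^ j * rexp ?_
  linarith

theorem IC0_eq_IC3_sub_IC4_general (K : ℕ) (j : ℕ) (a b : ℝ) (hb : 0 < b)
    (m : ℤ) (hm : a + 2 * b * K < (m : ℝ)) :
    IntegrableOn (fC3 K j (a - (m : ℝ)) b) (Set.Ioi (0 : ℝ)) ∧
    IntegrableOn (fC4 K j (a - (m : ℝ)) b) (Set.Ioi (0 : ℝ)) ∧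
    IC0 K j (a - (m : ℝ)) b = IC3 K j (a - (m : ℝ)) b - IC4 K j (a - (m : ℝ)) b := by
  set c := a - (m : ℝ)
  set r := -(2 * π * (c + 2 * b * K))
  have hr : 0 < r := by have := pi_pos; nlinarith
  have hK : (0 : ℝ) ≤ K := K.cast_nonneg
  have hbound : ∀ x ∈ Icc (0 : ℝ) K, ∀ t : ℝ, 0 ≤ t →
      ‖powMulExpQuad j c b (x - t * I)‖ ≤ (K + t) ^ j * rexp (-r * t) := fun x hx t ht => by
    simpa [r] using norm_powMulExpQuad_sub_mul_I_le j hb.le hx ht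
  have h3 : IntegrableOn (fun t : ℝ => powMulExpQuad j c b (-(t * I))) (Ioi 0) :=
    integrableOn_Ioi_of_norm_le_add_pow_mul_exp_neg
      (by unfold powMulExpQuad; fun_prop) j hK hr fun t ht => by
        simpa using hbound 0 ⟨le_rfl, hK⟩ t ht.le
  have h4 : IntegrableOn (fun t : ℝ => powMulExpQuad j c b (K - t * I)) (Ioi 0) :=
    integrableOn_Ioi_of_norm_le_add_pow_mul_exp_neg
      (by unfold powMulExpQuad; fun_prop) j hK hr fun t ht => hbound K ⟨hK, le_rfl⟩ t ht.le
  have hbottom : Tendsto (fun T : ℝ => ∫ x in (0 : ℝ)..K, powMulExpQuad j c b (x - T * I))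
      atTop (𝓝 0) := by
    refine tendsto_intervalIntegral_zero_of_norm_le ?_ (tendsto_add_pow_mul_exp_neg_atTop j hK hr)
    filter_upwards [eventually_ge_atTop 0] with T hT x hx
    exact hbound x (Ioc_subset_Icc_self (by simpa [hK] using hx)) T hT
  have hC0 := intervalIntegral_eq_vertical_rays_of_differentiable
    (differentiable_powMulExpQuad j c b) K hbottom h4 h3
  simp only [powMulExpQuad_sub_mul_I, powMulExpQuad_neg_mul_I K] at h3 h4
  refine ⟨(integrable_const_mul_iff (pow_ne_zero j (neg_ne_zero.mpr I_ne_zero)).isUnit _).mp h3,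
    h4, ?_⟩
  simp only [ofReal_natCast, powMulExpQuad_sub_mul_I, powMulExpQuad_neg_mul_I K, smul_eq_mul,
    integral_const_mul] at hC0
  change _ * ∫ x in (0 : ℝ)..K, powMulExpQuad j c b x = _
  rw [IC3, IC4, hC0]
  ring

/-- For `m > a + 2bK` the improper integrals `I_{C₃}` and `I_{C₄}` converge
absolutely, and `I_{C₀}(K,j;a−m,b) = I_{C₃}(K,j;a−m,b) − I_{C₄}(K,j;a−m,b)`. -/
theorem IC0_eq_IC3_sub_IC4 (K : ℕ) (hK : 1 ≤ K) (j : ℕ) (a b : ℝ) (hb : 0 < b)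
    (m : ℤ) (hm : a + 2 * b * K < (m : ℝ)) :
    IntegrableOn (fC3 K j (a - (m : ℝ)) b) (Set.Ioi (0 : ℝ)) ∧
    IntegrableOn (fC4 K j (a - (m : ℝ)) b) (Set.Ioi (0 : ℝ)) ∧
    IC0 K j (a - (m : ℝ)) b = IC3 K j (a - (m : ℝ)) b - IC4 K j (a - (m : ℝ)) b :=
  IC0_eq_IC3_sub_IC4_general K j a b hb m hm
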